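/- arXiv:2005.13339 — 12 statements merged into one kernel-verified Lean document; each statement's English description precedes it below -/
import Mathlib

section
/- (Merkle root binding; core of the paper's non-equivocation and consistency arguments) Assume the hashing is collision-free. Then for every k : ℕ and all lists X, Y : List α with X.length = 2^k and Y.length = 2^k, if MkRoot k X = MkRoot k Y then X = Y. -/
variable {α β : Type*}

/-- Merkle root of a list of length `2^k` (junk value otherwise). -/
def MkRoot [Inhabited α] (ℓ : α → β) (h : β → β → β) : ℕ → List α → β
  | 0, X => ℓ X.headI
  | k + 1, X => h (MkRoot ℓ h k (X.take (2 ^ k))) (MkRoot ℓ h k (X.drop (2 ^ k)))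

namespace List

theorem length_take_of_length_eq_two_pow_succ {X : List α} {k : ℕ} (hX : X.length = 2 ^ (k + 1)) :
    (X.take (2 ^ k)).length = 2 ^ k := by
  rw [length_take, hX, pow_succ]
  omega

theorem length_drop_of_length_eq_two_pow_succ {X : List α} {k : ℕ} (hX : X.length = 2 ^ (k + 1)) :
    (X.drop (2 ^ k)).length = 2 ^ k := by
  rw [length_drop, hX, pow_succ]
  omega

end List

open List in
theorem MkRoot_injOn [Inhabited α] {ℓ : α → β} {h : β → β → β}
    (hℓ : Function.Injective ℓ) (hh : Function.Injective2 h) (k : ℕ) :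
    Set.InjOn (MkRoot ℓ h k) {X | X.length = 2 ^ k} := by
  induction k with
  | zero =>
    intro X hX Y hY hroot
    obtain ⟨x, rfl⟩ := length_eq_one_iff.mp hX
    obtain ⟨y, rfl⟩ := length_eq_one_iff.mp hY
    exact congrArg ([·]) (hℓ hroot)
  | succ k ih =>
    intro X hX Y hY hroot
    obtain ⟨hleft, hright⟩ := hh hroot
    have htake := ih (length_take_of_length_eq_two_pow_succ hX)
      (length_take_of_length_eq_two_pow_succ hY) hleft
    have hdrop := ih (length_drop_of_length_eq_two_pow_succ hX)
      (length_drop_of_length_eq_two_pow_succ hY) hright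
    rw [← take_append_drop (2 ^ k) X, ← take_append_drop (2 ^ k) Y, htake, hdrop]

theorem merkle_root_binding [Inhabited α] (ℓ : α → β) (h : β → β → β)
    (hℓ : Function.Injective ℓ)
    (hh : ∀ b₁ b₂ b₁' b₂' : β, h b₁ b₂ = h b₁' b₂' → b₁ = b₁' ∧ b₂ = b₂')
    (k : ℕ) (X Y : List α) (hX : X.length = 2 ^ k) (hY : Y.length = 2 ^ k)
    (hroot : MkRoot ℓ h k X = MkRoot ℓ h k Y) : X = Y :=
  MkRoot_injOn hℓ (fun _ _ _ _ ↦ hh _ _ _ _) k hX hY hroot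
end

section
/- (Completeness of Merkle membership proofs with logarithmic size) For every k : ℕ, every list X : List α with X.length = 2^k, and every index i < 2^k, the authentication path MkProof k i X has length exactly k, and it verifies the i-th element of X against the Merkle root of X; that is, Rec k i (X.get i) (MkProof k i X) = MkRoot k X. -/
variable {α β : Type*}

/-- Root reconstruction from an authentication path, listed from the root
level down to the leaf level (junk value on ill-formed input). -/
def Rec (ℓ : α → β) (h : β → β → β) : ℕ → ℕ → α → List β → β
  | 0, _, x, _ => ℓ x
  | _ + 1, _, x, [] => ℓ x
  | k + 1, i, x, s :: π =>
    if i < 2 ^ k then h (Rec ℓ h k i x π) s else h s (Rec ℓ h k (i - 2 ^ k) x π)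

/-- Authentication path for index `i` in a list of length `2^k`. -/
def MkProof [Inhabited α] (ℓ : α → β) (h : β → β → β) : ℕ → ℕ → List α → List β
  | 0, _, _ => []
  | k + 1, i, X =>
    if i < 2 ^ k then MkRoot ℓ h k (X.drop (2 ^ k)) :: MkProof ℓ h k i (X.take (2 ^ k))
    else MkRoot ℓ h k (X.take (2 ^ k)) :: MkProof ℓ h k (i - 2 ^ k) (X.drop (2 ^ k))

/-! By induction on `k`: the first entry of the path is the root of the half of `X` not
containing index `i`, and the rest of the path verifies `X[i]` inside the other half, so
`Rec` recombines the two half-roots exactly as `MkRoot` does. -/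

section Halves

variable {X : List α} {k : ℕ}

theorem length_take_two_pow (hX : X.length = 2 ^ (k + 1)) : (X.take (2 ^ k)).length = 2 ^ k := by
  rw [List.length_take, hX, pow_succ]
  omega

theorem length_drop_two_pow (hX : X.length = 2 ^ (k + 1)) : (X.drop (2 ^ k)).length = 2 ^ k := by
  rw [List.length_drop, hX, pow_succ]
  omega

end Halves

section Merkle

variable [Inhabited α] (ℓ : α → β) (h : β → β → β)

theorem length_mkProof (k i : ℕ) (X : List α) : (MkProof ℓ h k i X).length = k := by
  induction k generalizing i X with
  | zero => rfl
  | succ k ih =>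
    unfold MkProof
    split_ifs <;> simp only [List.length_cons, ih]

theorem rec_mkProof_eq_mkRoot (k : ℕ) (X : List α) (hX : X.length = 2 ^ k) (i : ℕ)
    (hi : i < 2 ^ k) :
    Rec ℓ h k i (X[i]'(hX ▸ hi)) (MkProof ℓ h k i X) = MkRoot ℓ h k X := by
  induction k generalizing X i with
  | zero =>
    obtain ⟨x, rfl⟩ := List.length_eq_one_iff.mp hX
    obtain rfl : i = 0 := by omega
    rfl
  | succ k ih =>
    have hleft := length_take_two_pow hX
    have hright := length_drop_two_pow hX
    by_cases hik : i < 2 ^ k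
    · have hget : X[i] = (X.take (2 ^ k))[i] := (List.getElem_take ..).symm
      simp only [MkProof, Rec, MkRoot, if_pos hik]
      rw [hget, ih _ hleft i hik]
    · have hi' : i - 2 ^ k < 2 ^ k := by rw [pow_succ] at hi; omega
      have hget : X[i] = (X.drop (2 ^ k))[i - 2 ^ k] := by
        rw [List.getElem_drop]
        congr 1
        omega
      simp only [MkProof, Rec, MkRoot, if_neg hik]
      rw [hget, ih _ hright _ hi']

end Merkle

theorem merkle_proof_complete [Inhabited α] (ℓ : α → β) (h : β → β → β)
    (k : ℕ) (X : List α) (hX : X.length = 2 ^ k) (i : ℕ) (hi : i < 2 ^ k) :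
    (MkProof ℓ h k i X).length = k ∧
      Rec ℓ h k i (X.get ⟨i, by omega⟩) (MkProof ℓ h k i X) = MkRoot ℓ h k X :=
  ⟨length_mkProof ℓ h k i X, rec_mkProof_eq_mkRoot ℓ h k X hX i hi⟩
end

section
/- (No forgery of Merkle proofs for a modified element; core of the paper's verifiability argument that a membership proof for a modified or deleted transaction cannot be forged) Assume the hashing is collision-free. Let k : ℕ, let i < 2^k, let x, x' : α, and let π, π' : List β with π.length = k and π'.length = k. If Rec k i x π = Rec k i x' π' (i.e., both authentication paths reconstruct the same root for the same index i), then x = x'. -/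
variable {α β : Type*}

/- Both reconstructions take the same branch at every level, since the branch depends only on the
index, so injectivity of `h` peels off one level at a time. -/
theorem eq_of_Rec_eq {ℓ : α → β} {h : β → β → β} (hℓ : Function.Injective ℓ)
    (hh : Function.Injective2 h) {k i : ℕ} {x x' : α} {π π' : List β}
    (hlen : π.length = π'.length) (heq : Rec ℓ h k i x π = Rec ℓ h k i x' π') : x = x' := by
  induction k generalizing i π π' with
  | zero => exact hℓ heq
  | succ k ih =>
    match π, π', hlen with
    | [], [], _ => exact hℓ heq
    | s :: π, s' :: π', hlen =>
      have hlen : π.length = π'.length := Nat.succ.inj hlen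
      simp only [Rec] at heq
      split_ifs at heq
      · exact ih hlen (hh heq).1
      · exact ih hlen (hh heq).2

theorem merkle_no_forgery_general (ℓ : α → β) (h : β → β → β)
    (hℓ : Function.Injective ℓ)
    (hh : ∀ b₁ b₂ b₁' b₂' : β, h b₁ b₂ = h b₁' b₂' → b₁ = b₁' ∧ b₂ = b₂')
    (k : ℕ) (i : ℕ) (x x' : α) (π π' : List β)
    (hπ : π.length = k) (hπ' : π'.length = k)
    (heq : Rec ℓ h k i x π = Rec ℓ h k i x' π') : x = x' :=
  eq_of_Rec_eq hℓ (fun _ _ _ _ => hh _ _ _ _) (hπ.trans hπ'.symm) heq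

theorem merkle_no_forgery (ℓ : α → β) (h : β → β → β)
    (hℓ : Function.Injective ℓ)
    (hh : ∀ b₁ b₂ b₁' b₂' : β, h b₁ b₂ = h b₁' b₂' → b₁ = b₁' ∧ b₂ = b₂')
    (k : ℕ) (i : ℕ) (hi : i < 2 ^ k) (x x' : α) (π π' : List β)
    (hπ : π.length = k) (hπ' : π'.length = k)
    (heq : Rec ℓ h k i x π = Rec ℓ h k i x' π') : x = x' :=
  merkle_no_forgery_general ℓ h hℓ hh k i x x' π π' hπ hπ' heq
end

section
/- (Uniqueness of authentication paths) Assume the hashing is collision-free. Let k : ℕ, let X : List α with X.length = 2^k, let i < 2^k, let x : α, and let π : List β with π.length = k. If Rec k i x π = MkRoot k X, then π = MkProof k i X. -/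
variable {α β : Type*}

theorem rec_succ_cons_eq_mkRoot_succ_iff [Inhabited α] {ℓ : α → β} {h : β → β → β}
    (hh : Function.Injective2 h) (k i : ℕ) (x : α) (s : β) (π : List β) (X : List α) :
    Rec ℓ h (k + 1) i x (s :: π) = MkRoot ℓ h (k + 1) X ↔
      if i < 2 ^ k then
        Rec ℓ h k i x π = MkRoot ℓ h k (X.take (2 ^ k)) ∧ s = MkRoot ℓ h k (X.drop (2 ^ k))
      else
        s = MkRoot ℓ h k (X.take (2 ^ k)) ∧ Rec ℓ h k (i - 2 ^ k) x π = MkRoot ℓ h k (X.drop (2 ^ k)) := by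
  rw [Rec, MkRoot]
  split_ifs <;> exact hh.eq_iff

theorem merkle_path_unique_general [Inhabited α] (ℓ : α → β) (h : β → β → β)
    (hh : ∀ b₁ b₂ b₁' b₂' : β, h b₁ b₂ = h b₁' b₂' → b₁ = b₁' ∧ b₂ = b₂')
    (k : ℕ) (X : List α) (i : ℕ)
    (x : α) (π : List β) (hπ : π.length = k)
    (hver : Rec ℓ h k i x π = MkRoot ℓ h k X) : π = MkProof ℓ h k i X := by
  induction π generalizing k X i with
  | nil =>
    subst hπ
    rfl
  | cons s π ih =>
    obtain rfl : k = π.length + 1 := hπ.symm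
    have hpeel :=
      (rec_succ_cons_eq_mkRoot_succ_iff (h := h) (fun _ _ _ _ ↦ hh _ _ _ _) _ _ _ _ _ _).1 hver
    rw [MkProof]
    split_ifs at hpeel ⊢
    · exact congrArg₂ List.cons hpeel.2 (ih _ _ _ rfl hpeel.1)
    · exact congrArg₂ List.cons hpeel.1 (ih _ _ _ rfl hpeel.2)

theorem merkle_path_unique [Inhabited α] (ℓ : α → β) (h : β → β → β)
    (hℓ : Function.Injective ℓ)
    (hh : ∀ b₁ b₂ b₁' b₂' : β, h b₁ b₂ = h b₁' b₂' → b₁ = b₁' ∧ b₂ = b₂')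
    (k : ℕ) (X : List α) (hX : X.length = 2 ^ k) (i : ℕ) (hi : i < 2 ^ k)
    (x : α) (π : List β) (hπ : π.length = k)
    (hver : Rec ℓ h k i x π = MkRoot ℓ h k X) : π = MkProof ℓ h k i X :=
  merkle_path_unique_general ℓ h hh k X i x π hπ hver
end

section
/- (Completeness of incremental consistency proofs between two versions of the history tree) Let a ≤ b be natural numbers and let X : List α with X.length = 2^b. Then there exists a list S : List β with S.length = b - a such that S.foldl h (MkRoot a (X.take 2^a)) = MkRoot b X; moreover, one may take S to be the list whose j-th entry (for 0 ≤ j < b - a) is MkRoot (a + j) ((X.drop 2^(a+j)).take 2^(a+j)), i.e., the roots of the successive right siblings along the left spine of the tree. -/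
/-!
Cutting a list to its first `2^(k+1)` entries commutes with the recursion of `MkRoot`, so
`MkRoot (k+1) (X.take 2^(k+1))` is `h` applied to `MkRoot k (X.take 2^k)` and the root of the next
`2^k` entries. Iterating this from level `a` climbs the left spine of the tree, folding in one right
sibling per level, and at level `b` the prefix is all of `X`.
-/

variable {α β : Type*}

section Spine

variable [Inhabited α] (ℓ : α → β) (h : β → β → β)

def spineSiblingRoots (a d : ℕ) (X : List α) : List β :=
  (List.range d).map fun j => MkRoot ℓ h (a + j) ((X.drop (2 ^ (a + j))).take (2 ^ (a + j)))

theorem mkRoot_succ_take (k : ℕ) (X : List α) :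
    MkRoot ℓ h (k + 1) (X.take (2 ^ (k + 1))) =
      h (MkRoot ℓ h k (X.take (2 ^ k))) (MkRoot ℓ h k ((X.drop (2 ^ k)).take (2 ^ k))) := by
  have hle : 2 ^ k ≤ 2 ^ (k + 1) := Nat.pow_le_pow_right two_pos k.le_succ
  rw [MkRoot, List.take_take, min_eq_left hle, List.drop_take, pow_succ, mul_two,
    Nat.add_sub_cancel]

theorem foldl_spineSiblingRoots (a d : ℕ) (X : List α) :
    (spineSiblingRoots ℓ h a d X).foldl h (MkRoot ℓ h a (X.take (2 ^ a))) =
      MkRoot ℓ h (a + d) (X.take (2 ^ (a + d))) := by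
  induction d with
  | zero => rfl
  | succ d ih =>
    rw [spineSiblingRoots, List.range_succ, List.map_append, List.foldl_append,
      ← spineSiblingRoots, ih, ← add_assoc, mkRoot_succ_take]
    rfl

end Spine

theorem history_tree_incremental_complete [Inhabited α] (ℓ : α → β) (h : β → β → β)
    (a b : ℕ) (hab : a ≤ b) (X : List α) (hX : X.length = 2 ^ b) :
    ∃ S : List β, S.length = b - a ∧
      S.foldl h (MkRoot ℓ h a (X.take (2 ^ a))) = MkRoot ℓ h b X ∧
      S = (List.range (b - a)).map
        (fun j => MkRoot ℓ h (a + j) ((X.drop (2 ^ (a + j))).take (2 ^ (a + j)))) := by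
  refine ⟨spineSiblingRoots ℓ h a (b - a) X, by simp [spineSiblingRoots], ?_, rfl⟩
  rw [foldl_spineSiblingRoots, Nat.add_sub_cancel' hab, List.take_of_length_le hX.le]
end

section
/- (Root update from an authentication path; correctness of the enclave's newLRoot/DeriveNewRoot mechanism, which extends the ledger by replacing the last leaf hash in an incremental-proof template) Let k : ℕ, let X : List α with X.length = 2^k, let i < 2^k, and let x' : α. Then Rec k i x' (MkProof k i X) = MkRoot k (X.set i x'); that is, reconstructing the root from the old authentication path of position i, but with the new element x' substituted at the leaf, yields exactly the Merkle root of the list X with its i-th element replaced by x'. -/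
variable {α β : Type*}

/-! Induction on `k`: updating position `i` changes only the half of the list that contains `i`,
and the top entry of the authentication path is precisely the root of the other, unchanged half. -/

section MerkleSet

variable [Inhabited α] (ℓ : α → β) (h : β → β → β) {k i : ℕ} (X : List α) (x : α)

theorem mkRoot_succ_set_of_lt (hi : i < 2 ^ k) :
    MkRoot ℓ h (k + 1) (X.set i x) =
      h (MkRoot ℓ h k ((X.take (2 ^ k)).set i x)) (MkRoot ℓ h k (X.drop (2 ^ k))) := by
  rw [MkRoot, List.take_set, List.drop_set, if_pos hi]

theorem mkRoot_succ_set_of_le (hi : 2 ^ k ≤ i) :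
    MkRoot ℓ h (k + 1) (X.set i x) =
      h (MkRoot ℓ h k (X.take (2 ^ k))) (MkRoot ℓ h k ((X.drop (2 ^ k)).set (i - 2 ^ k) x)) := by
  rw [MkRoot, List.take_set, List.drop_set, if_neg hi.not_gt,
    List.set_eq_of_length_le ((List.length_take_le _ _).trans hi)]

end MerkleSet

theorem merkle_root_update [Inhabited α] (ℓ : α → β) (h : β → β → β)
    (k : ℕ) (X : List α) (hX : X.length = 2 ^ k) (i : ℕ) (hi : i < 2 ^ k) (x' : α) :
    Rec ℓ h k i x' (MkProof ℓ h k i X) = MkRoot ℓ h k (X.set i x') := by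
  induction k generalizing i X with
  | zero =>
    obtain ⟨x, rfl⟩ := List.length_eq_one_iff.mp hX
    obtain rfl : i = 0 := by omega
    rfl
  | succ k ih =>
    have htake : (X.take (2 ^ k)).length = 2 ^ k := by simp [hX, pow_succ]
    have hdrop : (X.drop (2 ^ k)).length = 2 ^ k := by simp [hX, pow_succ, mul_two]
    by_cases hik : i < 2 ^ k
    · rw [MkProof, if_pos hik, Rec, if_pos hik, ih _ htake _ hik,
        mkRoot_succ_set_of_lt _ _ _ _ hik]
    · have hi' : i - 2 ^ k < 2 ^ k := by rw [pow_succ] at hi; omega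
      rw [MkProof, if_neg hik, Rec, if_neg hik, ih _ hdrop _ hi',
        mkRoot_succ_set_of_le _ _ _ _ (not_lt.mp hik)]
end

section
/- (Composed verifiability: a membership proof against an extended version of the ledger binds elements of the old version; core of the paper's verifiability theorem) Assume the hashing is collision-free. Let a ≤ b, let X : List α with X.length = 2^a, let X' : List α with X'.length = 2^b, and suppose there exists S : List β with S.length = b - a and S.foldl h (MkRoot a X) = MkRoot b X' (an incremental consistency proof from X to X'). Let i < 2^b, x : α, and π : List β with π.length = b satisfy Rec b i x π = MkRoot b X' (a membership proof against the new root). Then x = X'.get i, and moreover if i < 2^a then x = X.get i. -/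
/-!
A Merkle root only depends on the first `2 ^ k` leaves, and a collision-free tree hash is injective
on lists of length `2 ^ k`. Peeling the consistency proof `S` off from the right, left-injectivity of
`h` shows that `MkRoot a X` is the root of the left subtree of height `a` of the new tree, i.e. of
the first `2 ^ a` leaves of `X'`; hence `X` is a prefix of `X'`. Independently, descending the
authentication path against the new root pins down the leaf `X'[i]`.
-/

variable {α β : Type*}

section MerkleRoot

variable [Inhabited α] {ℓ : α → β} {h : β → β → β}

theorem mkRoot_take (k : ℕ) (X : List α) : MkRoot ℓ h k (X.take (2 ^ k)) = MkRoot ℓ h k X := by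
  induction k generalizing X with
  | zero => cases X <;> rfl
  | succ k ih =>
    have hle : 2 ^ k ≤ 2 ^ (k + 1) := Nat.pow_le_pow_right two_pos k.le_succ
    have hsub : 2 ^ (k + 1) - 2 ^ k = 2 ^ k := by rw [pow_succ]; omega
    rw [MkRoot, MkRoot, List.take_take, min_eq_left hle, List.drop_take, hsub, ih (X.drop _)]

theorem mkRoot_take_of_le {k m : ℕ} (hm : 2 ^ k ≤ m) (X : List α) :
    MkRoot ℓ h k (X.take m) = MkRoot ℓ h k X := by
  rw [← mkRoot_take, List.take_take, min_eq_left hm, mkRoot_take]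

theorem eq_of_mkRoot_eq (hℓ : Function.Injective ℓ) (hh : Function.Injective2 h) {k : ℕ}
    {X Y : List α} (hX : X.length = 2 ^ k) (hY : Y.length = 2 ^ k)
    (hXY : MkRoot ℓ h k X = MkRoot ℓ h k Y) : X = Y := by
  induction k generalizing X Y with
  | zero =>
    obtain ⟨x, rfl⟩ := List.length_eq_one_iff.mp hX
    obtain ⟨y, rfl⟩ := List.length_eq_one_iff.mp hY
    simpa [MkRoot, hℓ.eq_iff] using hXY
  | succ k ih =>
    rw [MkRoot, MkRoot] at hXY
    obtain ⟨hleft, hright⟩ := hh hXY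
    rw [pow_succ, mul_two] at hX hY
    rw [← List.take_append_drop (2 ^ k) X, ← List.take_append_drop (2 ^ k) Y,
      ih (by simp [hX]) (by simp [hY]) hleft, ih (by simp [hX]) (by simp [hY]) hright]

theorem mkRoot_eq_of_foldl_eq (hh : Function.Injective2 h) {a : ℕ} {r : β} {X : List α}
    (S : List β) (hS : S.foldl h r = MkRoot ℓ h (a + S.length) X) : r = MkRoot ℓ h a X := by
  induction S using List.reverseRecOn generalizing X with
  | nil => simpa using hS
  | append_singleton S s ih =>
    rw [List.foldl_append, List.foldl_cons, List.foldl_nil, List.length_append,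
      List.length_singleton, ← Nat.add_assoc, MkRoot] at hS
    rw [ih (hh hS).1, mkRoot_take_of_le (Nat.pow_le_pow_right two_pos (Nat.le_add_right a _))]

theorem eq_getElem_of_rec_eq_mkRoot (hℓ : Function.Injective ℓ) (hh : Function.Injective2 h)
    {k i : ℕ} {x : α} {π : List β} {X : List α} (hπ : π.length = k) (hik : i < 2 ^ k)
    (hiX : i < X.length) (hrec : Rec ℓ h k i x π = MkRoot ℓ h k X) : x = X[i] := by
  induction k generalizing i π X with
  | zero =>
    obtain rfl : i = 0 := by simpa using hik
    cases X with
    | nil => simp at hiX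
    | cons y X => exact hℓ hrec
  | succ k ih =>
    obtain ⟨s, π, rfl⟩ := List.exists_cons_of_length_eq_add_one hπ
    rw [pow_succ, mul_two] at hik
    by_cases hi : i < 2 ^ k
    · rw [Rec, if_pos hi, MkRoot] at hrec
      rw [ih (by simpa using hπ) hi (by simp [hi, hiX]) (hh hrec).1, List.getElem_take]
    · rw [Rec, if_neg hi, MkRoot] at hrec
      rw [ih (by simpa using hπ) (by omega) (by simp; omega) (hh hrec).2, List.getElem_drop]
      congr 1
      omega

end MerkleRoot

theorem composed_verifiability [Inhabited α] (ℓ : α → β) (h : β → β → β)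
    (hℓ : Function.Injective ℓ)
    (hh : ∀ b₁ b₂ b₁' b₂' : β, h b₁ b₂ = h b₁' b₂' → b₁ = b₁' ∧ b₂ = b₂')
    (a b : ℕ) (hab : a ≤ b) (X X' : List α)
    (hX : X.length = 2 ^ a) (hX' : X'.length = 2 ^ b)
    (hS : ∃ S : List β, S.length = b - a ∧ S.foldl h (MkRoot ℓ h a X) = MkRoot ℓ h b X')
    (i : ℕ) (hi : i < 2 ^ b) (x : α) (π : List β) (hπ : π.length = b)
    (hver : Rec ℓ h b i x π = MkRoot ℓ h b X') :
    x = X'.get ⟨i, by omega⟩ ∧ (∀ hia : i < 2 ^ a, x = X.get ⟨i, by omega⟩) := by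
  have hh₂ : Function.Injective2 h := fun _ _ _ _ e => hh _ _ _ _ e
  have hx : x = X'[i] := eq_getElem_of_rec_eq_mkRoot hℓ hh₂ hπ hi (by omega) hver
  obtain ⟨S, hSlen, hSfold⟩ := hS
  have hroot : MkRoot ℓ h a X = MkRoot ℓ h a (X'.take (2 ^ a)) := by
    rw [mkRoot_take]
    exact mkRoot_eq_of_foldl_eq hh₂ S (by rwa [hSlen, Nat.add_sub_cancel' hab])
  have hprefix : X = X'.take (2 ^ a) :=
    eq_of_mkRoot_eq hℓ hh₂ hX (by simp [hX', Nat.pow_le_pow_right two_pos hab]) hroot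
  refine ⟨hx, fun hia => ?_⟩
  simp only [List.get_eq_getElem, hprefix, List.getElem_take]
  exact hx
end

section
/- (Version separation of Merkle roots) Assume the hashing is collision-free and additionally that the range of ℓ is disjoint from the range of h (for all x : α and b₁ b₂ : β, ℓ x ≠ h b₁ b₂). Then for all natural numbers a ≠ b and all lists X, Y : List α with X.length = 2^a and Y.length = 2^b, MkRoot a X ≠ MkRoot b Y; that is, Merkle roots of trees of different depths never collide. -/
variable {α β : Type*}

/-- Peeling one layer of `h` off two equal roots leaves equal roots of the left subtrees, so the
depth is the number of layers peeled before a leaf hash appears. -/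
theorem depth_eq_of_mkRoot_eq [Inhabited α] {ℓ : α → β} {h : β → β → β}
    (hh : ∀ b₁ b₂ b₁' b₂' : β, h b₁ b₂ = h b₁' b₂' → b₁ = b₁')
    (hdisj : ∀ (x : α) (b₁ b₂ : β), ℓ x ≠ h b₁ b₂) :
    ∀ {a b : ℕ} {X Y : List α}, MkRoot ℓ h a X = MkRoot ℓ h b Y → a = b
  | 0, 0, _, _, _ => rfl
  | 0, _ + 1, _, _, he => (hdisj _ _ _ he).elim
  | _ + 1, 0, _, _, he => (hdisj _ _ _ he.symm).elim
  | _ + 1, _ + 1, _, _, he =>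
    congrArg (· + 1) (depth_eq_of_mkRoot_eq hh hdisj (hh _ _ _ _ he))

theorem merkle_version_separation_general [Inhabited α] (ℓ : α → β) (h : β → β → β)
    (hh : ∀ b₁ b₂ b₁' b₂' : β, h b₁ b₂ = h b₁' b₂' → b₁ = b₁' ∧ b₂ = b₂')
    (hdisj : ∀ (x : α) (b₁ b₂ : β), ℓ x ≠ h b₁ b₂)
    (a b : ℕ) (hab : a ≠ b) (X Y : List α) :
    MkRoot ℓ h a X ≠ MkRoot ℓ h b Y :=
  fun he => hab (depth_eq_of_mkRoot_eq (fun _ _ _ _ e => (hh _ _ _ _ e).1) hdisj he)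

theorem merkle_version_separation [Inhabited α] (ℓ : α → β) (h : β → β → β)
    (hℓ : Function.Injective ℓ)
    (hh : ∀ b₁ b₂ b₁' b₂' : β, h b₁ b₂ = h b₁' b₂' → b₁ = b₁' ∧ b₂ = b₂')
    (hdisj : ∀ (x : α) (b₁ b₂ : β), ℓ x ≠ h b₁ b₂)
    (a b : ℕ) (hab : a ≠ b) (X Y : List α)
    (hX : X.length = 2 ^ a) (hY : Y.length = 2 ^ b) :
    MkRoot ℓ h a X ≠ MkRoot ℓ h b Y :=
  merkle_version_separation_general ℓ h hh hdisj a b hab X Y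
end

section
/- (Hash-chain binding; tamper evidence of chained block headers) Assume the chain hashing is collision-free. Then for all lists X, Y : List α, if ChainHead X = ChainHead Y then X = Y; in particular, the head of the hash chain uniquely determines the entire record history, without any assumption that X and Y have equal lengths. -/
variable {α β : Type*}

/-- Head of a hash chain with step function `h` and seed `c₀`. -/
def ChainHead (h : β → α → β) (c₀ : β) (X : List α) : β := X.foldl h c₀

/-! Reading chains from the head backwards: an injective step peels off the last record and the
previous head, and the seed, lying outside the range of the step, marks the empty chain. -/

namespace ChainHead

variable {h : β → α → β} {c₀ : β}

@[simp]
theorem concat (X : List α) (x : α) : ChainHead h c₀ (X ++ [x]) = h (ChainHead h c₀ X) x := by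
  simp [ChainHead]

theorem ne_seed_of_ne_nil (hseed : ∀ c x, h c x ≠ c₀) {X : List α} (hX : X ≠ []) :
    ChainHead h c₀ X ≠ c₀ := by
  obtain rfl | ⟨X, x, rfl⟩ := X.eq_nil_or_concat'
  · exact absurd rfl hX
  · rw [concat]
    exact hseed _ _

theorem injective (hh : Function.Injective2 h) (hseed : ∀ c x, h c x ≠ c₀) :
    Function.Injective (ChainHead h c₀) := by
  intro X
  induction X using List.reverseRecOn with
  | nil =>
    intro Y hXY
    by_contra hY
    exact ne_seed_of_ne_nil hseed (Ne.symm hY) hXY.symm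
  | append_singleton X x ih =>
    intro Y hXY
    rcases Y.eq_nil_or_concat' with rfl | ⟨Y, y, rfl⟩
    · exact absurd hXY (ne_seed_of_ne_nil hseed (by simp))
    · rw [concat, concat] at hXY
      obtain ⟨hheads, rfl⟩ := hh hXY
      rw [ih hheads]

end ChainHead

theorem hash_chain_binding (h : β → α → β) (c₀ : β)
    (hh : ∀ (c c' : β) (x x' : α), h c x = h c' x' → c = c' ∧ x = x')
    (hseed : ∀ (c : β) (x : α), h c x ≠ c₀)
    (X Y : List α) (heq : ChainHead h c₀ X = ChainHead h c₀ Y) : X = Y :=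
  ChainHead.injective (fun _ _ _ _ => hh _ _ _ _) hseed heq
end

section
/- (Hash-chain consistency: matching an intermediate chain value forces a prefix) Assume the chain hashing is collision-free. Then for all lists X, Y : List α, if ChainHead X is an element of the list of intermediate chain values List.scanl h c₀ Y, then X is a prefix of Y (X <+: Y). -/
/-!
Every intermediate value of the chain over `Y` is the head of the chain over some prefix of `Y`.
Collision-freeness makes `X ↦ ChainHead X` injective: peel off the last element of two chains
with equal heads, and note that a nonempty chain never returns to the seed. Hence `X` equals that
prefix.
-/

variable {α β : Type*}

namespace List

theorem exists_prefix_foldl_eq_of_mem_scanl {f : β → α → β} {b c : β} {l : List α}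
    (hc : c ∈ l.scanl f b) : ∃ P, P <+: l ∧ P.foldl f b = c := by
  obtain ⟨i, hi, rfl⟩ := mem_iff_getElem.mp hc
  exact ⟨l.take i, take_prefix i l, (getElem_scanl hi).symm⟩

theorem foldl_injective {f : β → α → β} {b : β} (hf : Function.Injective2 f)
    (hb : ∀ c x, f c x ≠ b) : Function.Injective (foldl f b) := by
  intro X
  induction X using reverseRecOn with
  | nil =>
    intro Z hZ
    rcases eq_nil_or_concat Z with rfl | ⟨Z, z, rfl⟩
    · rfl
    · simp only [concat_eq_append, foldl_append, foldl_cons, foldl_nil] at hZ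
      exact absurd hZ.symm (hb _ _)
  | append_singleton X x ih =>
    intro Z hZ
    rcases eq_nil_or_concat Z with rfl | ⟨Z, z, rfl⟩
    · simp only [foldl_append, foldl_cons, foldl_nil] at hZ
      exact absurd hZ (hb _ _)
    · simp only [concat_eq_append, foldl_append, foldl_cons, foldl_nil] at hZ
      obtain ⟨hXZ, rfl⟩ := hf hZ
      rw [ih hXZ, concat_eq_append]

end List

theorem hash_chain_prefix (h : β → α → β) (c₀ : β)
    (hh : ∀ (c c' : β) (x x' : α), h c x = h c' x' → c = c' ∧ x = x')
    (hseed : ∀ (c : β) (x : α), h c x ≠ c₀)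
    (X Y : List α) (hmem : ChainHead h c₀ X ∈ List.scanl h c₀ Y) : X <+: Y := by
  obtain ⟨P, hPY, hPX⟩ := List.exists_prefix_foldl_eq_of_mem_scanl hmem
  have hXP : X = P := List.foldl_injective (fun _ _ _ _ => hh _ _ _ _) hseed hPX.symm
  exact hXP ▸ hPY
end

section
/- (Soundness of trie inclusion and exclusion proofs; if a path of sibling digests along a key verifies a claimed value against the trie root, the map really assigns that value to the key) For every k : ℕ, every key-value map f : (Fin k → Bool) → Option α, every key : Fin k → Bool, every v : Option α, and every π : List β with π.length = k, if RecT k key v π = TrieRoot k f, then f key = v. In particular, taking v = some x yields soundness of inclusion proofs, and taking v = none yields soundness of exclusion (negative) proofs. -/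
/-! Injectivity of the node hash lets a matching root be peeled one level at a time: the
reconstructed digest must equal the root of the subtrie selected by the first key bit. After `k`
levels both sides are leaf hashes, and injectivity of `ℓ` gives `f key = v`. -/

variable {α β : Type*}

/-- Root of an authenticated binary trie over keys `Fin k → Bool`. -/
def TrieRoot (ℓ : Option α → β) (h : β → β → β) : (k : ℕ) → ((Fin k → Bool) → Option α) → β
  | 0, f => ℓ (f (fun i => i.elim0))
  | k + 1, f =>
    h (TrieRoot ℓ h k (fun v => f (Fin.cons false v)))
      (TrieRoot ℓ h k (fun v => f (Fin.cons true v)))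

/-- Root reconstruction along a key from sibling digests, listed from the
root level down (junk value on ill-formed input). -/
def RecT (ℓ : Option α → β) (h : β → β → β) : (k : ℕ) → (Fin k → Bool) → Option α → List β → β
  | 0, _, v, _ => ℓ v
  | _ + 1, _, v, [] => ℓ v
  | k + 1, key, v, s :: π =>
    if key 0 = false then h (RecT ℓ h k (fun i => key i.succ) v π) s
    else h s (RecT ℓ h k (fun i => key i.succ) v π)

theorem RecT_tail_eq_TrieRoot_cons_head {ℓ : Option α → β} {h : β → β → β}
    (hh : Function.Injective2 h) {k : ℕ} {f : (Fin (k + 1) → Bool) → Option α}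
    {key : Fin (k + 1) → Bool} {v : Option α} {s : β} {π : List β}
    (hver : RecT ℓ h (k + 1) key v (s :: π) = TrieRoot ℓ h (k + 1) f) :
    RecT ℓ h k (Fin.tail key) v π = TrieRoot ℓ h k (fun w => f (Fin.cons (key 0) w)) := by
  cases hb : key 0
  · rw [RecT, if_pos hb, TrieRoot] at hver
    exact (hh hver).1
  · rw [RecT, if_neg (by simp [hb]), TrieRoot] at hver
    exact (hh hver).2

theorem trie_proof_sound (ℓ : Option α → β) (h : β → β → β)
    (hℓ : Function.Injective ℓ)
    (hh : ∀ b₁ b₂ b₁' b₂' : β, h b₁ b₂ = h b₁' b₂' → b₁ = b₁' ∧ b₂ = b₂')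
    (k : ℕ) (f : (Fin k → Bool) → Option α) (key : Fin k → Bool)
    (v : Option α) (π : List β) (hπ : π.length = k)
    (hver : RecT ℓ h k key v π = TrieRoot ℓ h k f) : f key = v := by
  induction k generalizing π with
  | zero =>
    rw [Subsingleton.elim key (fun i => i.elim0)]
    exact (hℓ hver).symm
  | succ k ih =>
    obtain ⟨s, π, rfl⟩ := List.exists_cons_of_length_eq_add_one hπ
    rw [← Fin.cons_self_tail key]
    exact ih _ _ π (Nat.succ_injective hπ)
      (RecT_tail_eq_TrieRoot_cons_head (fun _ _ _ _ e => hh _ _ _ _ e) hver)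
end

section
/- (Completeness of trie inclusion and exclusion proofs) For every k : ℕ, every key-value map f : (Fin k → Bool) → Option α, and every key : Fin k → Bool, there exists a list π : List β with π.length = k such that RecT k key (f key) π = TrieRoot k f; that is, every key admits a proof of length k of its (possibly absent) value against the trie root. -/
variable {α β : Type*}

def trieProof (ℓ : Option α → β) (h : β → β → β) :
    (k : ℕ) → ((Fin k → Bool) → Option α) → (Fin k → Bool) → List β
  | 0, _, _ => []
  | k + 1, f, key =>
    TrieRoot ℓ h k (fun v => f (Fin.cons (!key 0) v)) ::
      trieProof ℓ h k (fun v => f (Fin.cons (key 0) v)) (Fin.tail key)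

theorem length_trieProof (ℓ : Option α → β) (h : β → β → β) :
    ∀ (k : ℕ) (f : (Fin k → Bool) → Option α) (key : Fin k → Bool),
      (trieProof ℓ h k f key).length = k
  | 0, _, _ => rfl
  | k + 1, f, key => by
    rw [trieProof, List.length_cons, length_trieProof ℓ h k]

theorem recT_trieProof (ℓ : Option α → β) (h : β → β → β) :
    ∀ (k : ℕ) (f : (Fin k → Bool) → Option α) (key : Fin k → Bool),
      RecT ℓ h k key (f key) (trieProof ℓ h k f key) = TrieRoot ℓ h k f
  | 0, f, key => by
    rw [Subsingleton.elim key fun i => i.elim0]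
    rfl
  | k + 1, f, key => by
    have ih := recT_trieProof ℓ h k (fun v => f (Fin.cons (key 0) v)) (Fin.tail key)
    rw [Fin.cons_self_tail] at ih
    rw [trieProof, RecT, TrieRoot]
    cases hkey : key 0 <;> rw [hkey] at ih
    · exact congrArg (h · _) ih
    · exact congrArg (h _) ih

theorem trie_proof_complete_general (ℓ : Option α → β) (h : β → β → β)
    (k : ℕ) (f : (Fin k → Bool) → Option α) (key : Fin k → Bool) :
    ∃ π : List β, π.length = k ∧ RecT ℓ h k key (f key) π = TrieRoot ℓ h k f :=
  ⟨trieProof ℓ h k f key, length_trieProof ℓ h k f key, recT_trieProof ℓ h k f key⟩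

theorem trie_proof_complete (ℓ : Option α → β) (h : β → β → β)
    (hℓ : Function.Injective ℓ)
    (hh : ∀ b₁ b₂ b₁' b₂' : β, h b₁ b₂ = h b₁' b₂' → b₁ = b₁' ∧ b₂ = b₂')
    (k : ℕ) (f : (Fin k → Bool) → Option α) (key : Fin k → Bool) :
    ∃ π : List β, π.length = k ∧ RecT ℓ h k key (f key) π = TrieRoot ℓ h k f :=
  trie_proof_complete_general ℓ h k f key
end
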